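/- Let M = (E, 𝓘) be a matroid on a finite groundset E with set of bases 𝓑, and let μ : E → ℝ assign positive, pairwise distinct weights. If a basis B satisfies μ(B) ≥ μ(B') for every B' ∈ 𝓝_{B,μ}, then B is a maximum-weight basis. (The unimodal graph whose vertices are bases and whose neighborhoods are the sets 𝓝_{B,μ} has no suboptimal local maximum.) -/

import Mathlib

open Matroid

/-- Total weight of a set of elements: `μ(S) = ∑_{e ∈ S} μ_e`. -/
noncomputable def weight {α : Type*} (μ : α → ℝ) (S : Set α) : ℝ := ∑ᶠ e ∈ S, μ e

/-- The neighborhood `𝓝_{B,μ}` of a basis `B`: all sets `(B \ {σ_{B,μ}(e)}) ∪ {e}` for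
`e ∈ E \ B` such that `K_e(B) = {x ∈ B : (B \ {x}) ∪ {e}` is a basis`}` is nonempty, where
`σ_{B,μ}(e)` is the minimum-weight element of `K_e(B)`. -/
def neighborhood {α : Type*} (M : Matroid α) (μ : α → ℝ) (B : Set α) : Set (Set α) :=
  {Bp | ∃ e ∈ M.E \ B, ∃ x ∈ B,
      M.IsBase (B \ {x} ∪ {e}) ∧
      (∀ y ∈ B, M.IsBase (B \ {y} ∪ {e}) → μ x ≤ μ y) ∧
      Bp = B \ {x} ∪ {e}}

/-- weight of an exchange -/
lemma weight_exchange {α : Type*} (μ : α → ℝ) {S : Set α} (hS : S.Finite) {x e : α}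
    (hx : x ∈ S) (he : e ∉ S) :
    weight μ (S \ {x} ∪ {e}) = weight μ S - μ x + μ e := by
  have h1 : S \ {x} ∪ {e} = insert e (S \ {x}) := by
    rw [Set.union_singleton]
  have hxS : S = insert x (S \ {x}) := by
    rw [Set.insert_diff_singleton, Set.insert_eq_self.2 hx]
  have hfin : (S \ {x}).Finite := hS.diff
  have hens : e ∉ S \ {x} := fun h => he h.1
  have hxns : x ∉ S \ {x} := fun h => h.2 rfl
  have h2 : weight μ S = μ x + ∑ᶠ i ∈ S \ {x}, μ i := by
    rw [weight]
    conv_lhs => rw [hxS]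
    rw [finsum_mem_insert _ hxns hfin]
  rw [weight, h1, finsum_mem_insert _ hens hfin, h2]
  ring

/-- co-exchange: for a pair of bases and `y ∈ B \ B'`, some `g ∈ B' \ B` can be swapped out
of `B'` in favour of `y`. -/
lemma coexchange {α : Type*} {M : Matroid α} {B B' : Set α} (hB : M.IsBase B) (hB' : M.IsBase B')
    {y : α} (hy : y ∈ B \ B') :
    ∃ g ∈ B' \ B, M.IsBase (insert y (B' \ {g})) := by
  have hd1 : M✶.IsBase (M.E \ B) := hB.compl_isBase_dual
  have hd2 : M✶.IsBase (M.E \ B') := hB'.compl_isBase_dual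
  have hymem : y ∈ (M.E \ B') \ (M.E \ B) := by
    refine ⟨⟨hB.subset_ground hy.1, hy.2⟩, fun h => h.2 hy.1⟩
  obtain ⟨g, hg, hgB⟩ := hd2.exchange hd1 hymem
  have hgB' : g ∈ B' := by
    by_contra hgB'
    exact hg.2 ⟨hg.1.1, hgB'⟩
  have hgnB : g ∉ B := hg.1.2
  refine ⟨g, ⟨hgB', hgnB⟩, ?_⟩
  have hset : insert g ((M.E \ B') \ {y}) = M.E \ insert y (B' \ {g}) := by
    ext z
    constructor
    · rintro (rfl | ⟨⟨hzE, hzB'⟩, hzy⟩)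
      · refine ⟨hg.1.1, ?_⟩
        rintro (rfl | ⟨_, hzg⟩)
        · exact hgnB hy.1
        · exact hzg rfl
      · exact ⟨hzE, by rintro (rfl | ⟨hzB'2, _⟩) <;> [exact hzy rfl; exact hzB' hzB'2]⟩
    · rintro ⟨hzE, hz⟩
      by_cases hzg : z = g
      · exact Or.inl hzg
      · refine Or.inr ⟨⟨hzE, fun hzB' => hz (Or.inr ⟨hzB', hzg⟩)⟩, fun hzy => hz (Or.inl hzy)⟩
  rw [hset] at hgB
  have hsub : insert y (B' \ {g}) ⊆ M.E := by
    refine Set.insert_subset (hB.subset_ground hy.1) ((Set.diff_subset).trans hB'.subset_ground)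
  have := hgB.compl_isBase_of_dual
  rwa [Set.diff_diff_cancel_left hsub] at this

/-- A basis that is maximal within its neighborhood `𝓝_{B,μ}` is a maximum-weight basis:
the unimodal graph has no suboptimal local maximum. -/
theorem no_suboptimal_local_maximum {α : Type*} (M : Matroid α) (hfin : M.E.Finite)
    (μ : α → ℝ) (hpos : ∀ e ∈ M.E, 0 < μ e)
    (hinj : ∀ x ∈ M.E, ∀ y ∈ M.E, x ≠ y → μ x ≠ μ y)
    (B : Set α) (hB : M.IsBase B)
    (hloc : ∀ Bp ∈ neighborhood M μ B, weight μ Bp ≤ weight μ B) :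
    ∀ B', M.IsBase B' → weight μ B' ≤ weight μ B := by
  have hBfin : B.Finite := hfin.subset hB.subset_ground
  -- Local optimality: every exchange into B is non-improving.
  have hP : ∀ e ∈ M.E \ B, ∀ z ∈ B, M.IsBase (B \ {z} ∪ {e}) → μ e ≤ μ z := by
    intro e he z hz hbase
    have hK : ({x ∈ B | M.IsBase (B \ {x} ∪ {e})}).Finite := hBfin.subset (Set.sep_subset _ _)
    obtain ⟨σ, hσmem, hσmin⟩ := Set.exists_min_image _ μ hK ⟨z, hz, hbase⟩
    have hnb : (B \ {σ} ∪ {e}) ∈ neighborhood M μ B := by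
      exact ⟨e, he, σ, hσmem.1, hσmem.2, fun y hy hby => hσmin y ⟨hy, hby⟩, rfl⟩
    have hw := hloc _ hnb
    rw [weight_exchange μ hBfin hσmem.1 he.2] at hw
    have heσ : μ e ≤ μ σ := by linarith
    exact heσ.trans (hσmin z ⟨hz, hbase⟩)
  -- A maximum-weight base exists.
  have h𝓑fin : {B' : Set α | M.IsBase B'}.Finite :=
    hfin.finite_subsets.subset fun B' hB' => hB'.subset_ground
  obtain ⟨Bs, hBs, hBsmax⟩ :=
    Set.exists_max_image {B' : Set α | M.IsBase B'} (weight μ) h𝓑fin ⟨B, hB⟩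
  -- It suffices to show the max weight is at most weight B.
  intro B' hB'
  refine (hBsmax B' hB').trans ?_
  by_contra hlt
  push_neg at hlt
  have hBsfin : Bs.Finite := hfin.subset hBs.subset_ground
  -- B \ Bs is nonempty
  have hne : (B \ Bs).Nonempty := by
    rw [Set.diff_nonempty]
    intro hsub
    rw [← hB.eq_of_subset_isBase hBs hsub] at hlt
    exact lt_irrefl _ hlt
  -- pick max-weight y in B \ Bs
  obtain ⟨y, hy, hymax⟩ := Set.exists_max_image (B \ Bs) μ (hBfin.diff) hne
  -- co-exchange g
  obtain ⟨g, hg, hgbase⟩ := coexchange hB hBs hy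
  -- weight comparison: μ y < μ g
  have hw1 : weight μ (insert y (Bs \ {g})) ≤ weight μ Bs := hBsmax _ hgbase
  rw [← Set.union_singleton, weight_exchange μ hBsfin hg.1 hy.2] at hw1
  have hyg : y ≠ g := fun h => hg.2 (h ▸ hy.1)
  have hμyg : μ y ≠ μ g := hinj y (hB.subset_ground hy.1) g (hBs.subset_ground hg.1) hyg
  have hlt1 : μ y < μ g := lt_of_le_of_ne (by linarith) hμyg
  -- find z ∈ B \ Bs with B \ {z} ∪ {g} a base
  have hgE : g ∈ M.E := hBs.subset_ground hg.1
  have hI : M.Indep (insert g (B ∩ Bs)) :=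
    hBs.indep.subset (Set.insert_subset hg.1 Set.inter_subset_right)
  obtain ⟨Bh, hBh, hIBh, hBhsub⟩ := hI.exists_isBase_subset_union_isBase hB
  have hBhsub' : Bh ⊆ insert g B := by
    refine hBhsub.trans ?_
    rintro t (ht | ht)
    · rcases ht with rfl | ht
      · exact Set.mem_insert _ _
      · exact Set.mem_insert_of_mem _ ht.1
    · exact Set.mem_insert_of_mem _ ht
  have hgBh : g ∈ Bh := hIBh (Set.mem_insert _ _)
  have hgnB : g ∉ B := hg.2
  have hBhdiff : Bh \ B = {g} := by
    apply Set.eq_singleton_iff_unique_mem.2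
    refine ⟨⟨hgBh, hgnB⟩, fun t ht => ?_⟩
    rcases hBhsub' ht.1 with rfl | htB
    · rfl
    · exact absurd htB ht.2
  have hcard : (B \ Bh).encard = 1 := by
    rw [hB.encard_diff_comm hBh, hBhdiff, Set.encard_singleton]
  obtain ⟨z, hz⟩ := Set.encard_eq_one.1 hcard
  have hzB : z ∈ B := (hz ▸ Set.mem_singleton z : z ∈ B \ Bh).1
  have hznBh : z ∉ Bh := (hz ▸ Set.mem_singleton z : z ∈ B \ Bh).2
  have hznBs : z ∉ Bs := by
    intro hzs
    exact hznBh (hIBh (Set.mem_insert_of_mem _ ⟨hzB, hzs⟩))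
  -- Bh = insert g (B \ {z})
  have hBheq : Bh = B \ {z} ∪ {g} := by
    apply Set.eq_of_subset_of_subset
    · intro t ht
      rcases hBhsub' ht with rfl | htB
      · exact Or.inr rfl
      · refine Or.inl ⟨htB, fun htz => ?_⟩
        rw [Set.mem_singleton_iff] at htz
        subst htz
        exact hznBh ht
    · rintro t (⟨htB, htz⟩ | ht)
      · by_contra htBh
        have : t ∈ B \ Bh := ⟨htB, htBh⟩
        rw [hz] at this
        exact htz this
      · rw [Set.mem_singleton_iff] at ht
        exact ht ▸ hgBh
  have hzbase : M.IsBase (B \ {z} ∪ {g}) := hBheq ▸ hBh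
  -- local optimality at g, z
  have hgz : μ g ≤ μ z := hP g ⟨hgE, hgnB⟩ z hzB hzbase
  have hzy : μ z ≤ μ y := hymax z ⟨hzB, hznBs⟩
  linarith
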